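/- arXiv:2404.13656 — 6 statements merged into one kernel-verified Lean document; each statement's English description precedes it below -/
import Mathlib

section
/- Let (X,S) be a minimal subshift over a finite alphabet A and let φ : ℝ^A → ℝ be a linear form such that the image under φ of the abelianization vectors of words in the language of X is bounded, and such that φ(e_a) ≡ φ(e_b) (mod ℤ) for all letters a, b ∈ A. Then t := φ(e_a) mod ℤ is a continuous (additive) eigenvalue of (X,S): there exists a continuous function f : X → ℝ/ℤ with f ∘ S = f + t. -/
open Set


/-- The shift map on one-sided infinite words. -/
def shiftN {A : Type*} (x : ℕ → A) : ℕ → A := fun n => x (n + 1)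

/-- The factor of `x` of length `l` starting at position `k`. -/
def factorN {A : Type*} (x : ℕ → A) (k l : ℕ) : List A := (List.range l).map (fun i => x (k + i))

/-- The language of a subshift: the set of finite factors of its elements. -/
def languageN {A : Type*} (X : Set (ℕ → A)) : Set (List A) :=
  {w | ∃ x ∈ X, ∃ k, w = factorN x k w.length}

theorem gottschalk_hedlund {Y : Type*} [TopologicalSpace Y] [T2Space Y]
    (X : Set Y) (hXc : IsCompact X) (hne : X.Nonempty)
    (S : Y → Y) (hS : Continuous S) (hinv : Set.MapsTo S X X)
    (hmin : ∀ x ∈ X, ∀ F : Set Y, F ⊆ X → IsClosed F → Set.MapsTo S F F → x ∈ F → X ⊆ F)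
    (g : Y → ℝ) (hg : Continuous g) (C : ℝ)
    (hbd : ∀ x ∈ X, ∀ n : ℕ, |∑ i ∈ Finset.range n, g (S^[i] x)| ≤ C) :
    ∃ u : Y → ℝ, ContinuousOn u X ∧ ∀ x ∈ X, u (S x) = u x + g x := by
  classical
  set T : Y × ℝ → Y × ℝ := fun p => (S p.1, p.2 + g p.1) with hTdef
  have hT : Continuous T := ((hS.comp continuous_fst).prodMk
    (continuous_snd.add (hg.comp continuous_fst)))
  have hTn : ∀ (n : ℕ) (x : Y) (s : ℝ),
      T^[n] (x, s) = (S^[n] x, s + ∑ i ∈ Finset.range n, g (S^[i] x)) := by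
    intro n
    induction n with
    | zero => intro x s; simp
    | succ n ih =>
      intro x s
      rw [Function.iterate_succ_apply', ih, Function.iterate_succ_apply']
      simp [hTdef, Finset.sum_range_succ, add_assoc]
  obtain ⟨x₀, hx₀⟩ := hne
  set B : Set (Y × ℝ) := X ×ˢ Icc (-C) C with hBdef
  have hBc : IsCompact B := hXc.prod isCompact_Icc
  have hBcl : IsClosed B := hXc.isClosed.prod isClosed_Icc
  have hBX : ∀ p ∈ B, p.1 ∈ X := fun p hp => hp.1
  set O : Set (Y × ℝ) := {p | ∃ n : ℕ, p = T^[n] (x₀, 0)} with hOdef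
  have hOB : O ⊆ B := by
    rintro p ⟨n, rfl⟩
    rw [hTn]
    refine ⟨hinv.iterate n hx₀, ?_⟩
    rw [zero_add]
    exact abs_le.mp (hbd x₀ hx₀ n)
  set K : Set (Y × ℝ) := closure O with hKdef
  have hKB : K ⊆ B := closure_minimal hOB hBcl
  have hKc : IsCompact K := hBc.of_isClosed_subset isClosed_closure hKB
  have hOinv : Set.MapsTo T O O := by
    rintro p ⟨n, rfl⟩
    exact ⟨n + 1, (Function.iterate_succ_apply' T n (x₀, 0)).symm⟩
  have hKinv : Set.MapsTo T K K := hOinv.closure hT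
  have hKne : K.Nonempty := ⟨(x₀, 0), subset_closure ⟨0, rfl⟩⟩
  set 𝒮 : Set (Set (Y × ℝ)) :=
    {M | M ⊆ K ∧ M.Nonempty ∧ IsClosed M ∧ Set.MapsTo T M M} with h𝒮def
  obtain ⟨M, -, hMS, hMmin⟩ : ∃ M, M ⊆ K ∧ Minimal (· ∈ 𝒮) M := by
    apply zorn_superset_nonempty 𝒮 ?_ K ⟨Subset.rfl, hKne, isClosed_closure, hKinv⟩
    intro c hc hchain hcne
    haveI : Nonempty c := hcne.to_subtype
    have hdir : DirectedOn (· ⊇ ·) c := by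
      intro A hA B' hB'
      rcases hchain.total hA hB' with h | h
      exacts [⟨A, hA, Subset.rfl, h⟩, ⟨B', hB', h, Subset.rfl⟩]
    have hnonempty : (⋂₀ c).Nonempty :=
      IsCompact.nonempty_sInter_of_directed_nonempty_isCompact_isClosed hdir
        (fun U hU => (hc hU).2.1)
        (fun U hU => hKc.of_isClosed_subset (hc hU).2.2.1 (hc hU).1)
        (fun U hU => (hc hU).2.2.1)
    obtain ⟨U₀, hU₀⟩ := hcne
    refine ⟨⋂₀ c, ⟨(sInter_subset_of_mem hU₀).trans (hc hU₀).1, hnonempty,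
      isClosed_sInter fun U hU => (hc hU).2.2.1, ?_⟩, fun s hs => sInter_subset_of_mem hs⟩
    intro p hp U hU
    exact (hc hU).2.2.2 (hp U hU)
  obtain ⟨hMK, hMne, hMcl, hMinv⟩ := hMS
  have hMc : IsCompact M := hKc.of_isClosed_subset hMcl hMK
  have hMB : M ⊆ B := hMK.trans hKB
  -- uniqueness of the fiber
  have huniq : ∀ x s s', (x, s) ∈ M → (x, s') ∈ M → s = s' := by
    intro x s s' hsM hs'M
    by_contra hss
    set c : ℝ := s' - s with hcdef
    have hc0 : c ≠ 0 := sub_ne_zero.mpr (Ne.symm hss)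
    set R : Y × ℝ → Y × ℝ := fun q => (q.1, q.2 - c) with hRdef
    set N : Set (Y × ℝ) := R ⁻¹' M with hNdef
    have hNcl : IsClosed N := hMcl.preimage (continuous_fst.prodMk (continuous_snd.sub continuous_const))
    have hNinv : Set.MapsTo T N N := by
      intro q hq
      have : T (R q) ∈ M := hMinv hq
      have hTR : T (R q) = R (T q) := by simp [hTdef, hRdef, sub_add_eq_add_sub]
      rw [hTR] at this
      exact this
    have hq' : (x, s') ∈ N := by
      have : R (x, s') = (x, s) := by simp [hRdef, hcdef]
      simp only [hNdef, mem_preimage, this]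
      exact hsM
    have hMN : M ⊆ M ∩ N := hMmin ⟨(inter_subset_left).trans hMK, ⟨(x, s'), hs'M, hq'⟩,
      hMcl.inter hNcl, fun p hp => ⟨hMinv hp.1, hNinv hp.2⟩⟩ inter_subset_left
    have hiter : ∀ n : ℕ, (x, s' - n * c) ∈ M := by
      intro n
      induction n with
      | zero => simpa using hs'M
      | succ n ih =>
        have := (hMN ih).2
        have h2 : R (x, s' - n * c) = (x, s' - (n + 1) * c) := by
          simp only [hRdef]
          ring_nf
        rw [hNdef, mem_preimage, h2] at this
        exact_mod_cast this
    obtain ⟨n, hn⟩ := exists_nat_gt ((C + |s'|) / |c|)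
    have hcpos : (0:ℝ) < |c| := abs_pos.mpr hc0
    have hnc : C + |s'| < n * |c| := (div_lt_iff₀ hcpos).mp hn
    have hmem := hMB (hiter n)
    have : |s' - n * c| ≤ C := abs_le.mpr hmem.2
    have h1 : (n : ℝ) * |c| - |s'| ≤ |s' - n * c| := by
      have := abs_sub_abs_le_abs_sub ((n:ℝ) * c) s'
      rw [abs_sub_comm] at this
      calc (n : ℝ) * |c| - |s'| = |(n:ℝ) * c| - |s'| := by
            rw [abs_mul, Nat.abs_cast]
        _ ≤ |(n:ℝ) * c - s'| := abs_sub_abs_le_abs_sub _ _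
        _ = |s' - n * c| := by rw [abs_sub_comm]
    linarith
  -- surjectivity onto X
  have hsurj : ∀ x ∈ X, ∃ s, (x, s) ∈ M := by
    intro x hx
    obtain ⟨p₀, hp₀⟩ := hMne
    have hproj : Prod.fst '' M ⊆ X := by
      rintro - ⟨p, hp, rfl⟩; exact (hMB hp).1
    have hcproj : IsCompact (Prod.fst '' M) := hMc.image continuous_fst
    have hclproj : IsClosed (Prod.fst '' M) := hcproj.isClosed
    have hinvproj : Set.MapsTo S (Prod.fst '' M) (Prod.fst '' M) := by
      rintro - ⟨p, hp, rfl⟩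
      exact ⟨T p, hMinv hp, rfl⟩
    have hsub := hmin p₀.1 (hproj ⟨p₀, hp₀, rfl⟩) (Prod.fst '' M) hproj hclproj hinvproj
      ⟨p₀, hp₀, rfl⟩
    obtain ⟨p, hp, hpx⟩ := hsub hx
    exact ⟨p.2, by rw [← hpx]; simpa using hp⟩
  set u : Y → ℝ := fun x => if h : ∃ s, (x, s) ∈ M then h.choose else 0 with hudef
  have hu : ∀ x ∈ X, (x, u x) ∈ M := by
    intro x hx
    have h := hsurj x hx
    simp only [hudef, dif_pos h]
    exact h.choose_spec
  have huval : ∀ x s, (x, s) ∈ M → u x = s := by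
    intro x s hs
    have hx : x ∈ X := (hMB hs).1
    exact huniq x (u x) s (hu x hx) hs
  refine ⟨u, ?_, ?_⟩
  · -- continuity on X
    haveI : CompactSpace M := isCompact_iff_compactSpace.mp hMc
    set e : M ≃ X := {
      toFun := fun p => ⟨p.1.1, (hMB p.2).1⟩
      invFun := fun z => ⟨(z.1, u z.1), hu z.1 z.2⟩
      left_inv := by
        rintro ⟨⟨x, s⟩, hp⟩
        exact Subtype.ext (Prod.ext rfl (huval x s hp))
      right_inv := fun z => rfl } with hedef
    have he : Continuous e := Continuous.subtype_mk (continuous_fst.comp continuous_subtype_val) _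
    let homeo := Continuous.homeoOfEquivCompactToT2 (f := e) he
    have hrest : X.domRestrict u = (fun p : M => p.1.2) ∘ homeo.symm := rfl
    rw [continuousOn_iff_continuous_restrict, hrest]
    exact (continuous_snd.comp continuous_subtype_val).comp homeo.symm.continuous
  · intro x hx
    have h1 : T (x, u x) ∈ M := hMinv (hu x hx)
    have h2 : T (x, u x) = (S x, u x + g x) := rfl
    rw [h2] at h1
    exact huval (S x) (u x + g x) h1

theorem shiftN_iterate_apply {A : Type*} (x : ℕ → A) : ∀ (i k : ℕ), shiftN^[i] x k = x (k + i)
  | 0, k => by simp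
  | (i+1), k => by
    rw [Function.iterate_succ_apply, shiftN_iterate_apply (shiftN x) i k]
    simp [shiftN, Nat.add_assoc, Nat.add_comm 1 i]

theorem factorN_count {A : Type*} [DecidableEq A] (x : ℕ → A) (n : ℕ) :
    (fun a => ((factorN x 0 n).count a : ℝ)) = ∑ i ∈ Finset.range n, Pi.single (x i) 1 := by
  induction n with
  | zero => funext a; simp [factorN]
  | succ n ih =>
    have hfac : factorN x 0 (n+1) = factorN x 0 n ++ [x n] := by
      simp [factorN, List.range_succ]
    funext a
    rw [hfac]
    have := congrFun ih a
    simp only [Finset.sum_range_succ, Finset.sum_apply, Pi.add_apply] at this ⊢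
    rw [List.count_append, ← this]
    push_cast
    congr 1
    rw [Pi.single_apply]
    by_cases h : x n = a
    · subst h; simp [List.count_singleton]
    · rw [if_neg (Ne.symm h)]
      simp [List.count_singleton, h]

/-- If `(X, S)` is a minimal subshift over a finite alphabet `A` and `φ : ℝ^A → ℝ` is a linear
form which is bounded on abelianizations of words of the language and with
`φ(e_a) ≡ φ(e_b) mod ℤ` for all letters `a, b`, then `φ(e_a) mod ℤ` is a continuous additive
eigenvalue of `(X, S)`. -/
theorem linear_form_gives_continuous_eigenvalue
    {A : Type*} [Fintype A] [DecidableEq A] [Nonempty A]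
    [TopologicalSpace A] [DiscreteTopology A]
    (X : Set (ℕ → A)) (hne : X.Nonempty) (hcl : IsClosed X)
    (hinv : ∀ x ∈ X, shiftN x ∈ X)
    (hmin : ∀ x ∈ X, closure {y | ∃ n : ℕ, y = shiftN^[n] x} = X)
    (φ : (A → ℝ) →ₗ[ℝ] ℝ)
    (hbdd : ∃ C : ℝ, ∀ w ∈ languageN X, |φ (fun a => (w.count a : ℝ))| ≤ C)
    (hcong : ∀ a b : A, ∃ m : ℤ, φ (Pi.single a 1) - φ (Pi.single b 1) = m)
    (a : A) :
    ∃ f : X → AddCircle (1 : ℝ), Continuous f ∧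
      ∀ x : X, f ⟨shiftN x.val, hinv x.val x.2⟩ = f x + ((φ (Pi.single a 1) : ℝ) : AddCircle (1 : ℝ)) := by
  classical
  obtain ⟨C, hC⟩ := hbdd
  set g : (ℕ → A) → ℝ := fun x => φ (Pi.single (x 0) 1) with hgdef
  have hgcont : Continuous g := by
    have h : Continuous fun b : A => φ (Pi.single b 1) := continuous_of_discreteTopology
    exact h.comp (continuous_apply 0)
  have hXc : IsCompact X := hcl.isCompact
  have hScont : Continuous (shiftN (A := A)) := continuous_pi fun n => continuous_apply (n+1)
  have hSinv : Set.MapsTo shiftN X X := fun x hx => hinv x hx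
  have hmin' : ∀ x ∈ X, ∀ F : Set (ℕ → A), F ⊆ X → IsClosed F →
      Set.MapsTo shiftN F F → x ∈ F → X ⊆ F := by
    intro x hx F hFX hFcl hFinv hxF
    have horb : {y | ∃ n : ℕ, y = shiftN^[n] x} ⊆ F := by
      rintro - ⟨n, rfl⟩
      induction n with
      | zero => simpa using hxF
      | succ n ih => rw [Function.iterate_succ_apply']; exact hFinv ih
    calc X = closure {y | ∃ n : ℕ, y = shiftN^[n] x} := (hmin x hx).symm
      _ ⊆ closure F := closure_mono horb
      _ = F := hFcl.closure_eq
  have hbd : ∀ x ∈ X, ∀ n : ℕ, |∑ i ∈ Finset.range n, g (shiftN^[i] x)| ≤ C := by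
    intro x hx n
    have h2 : ∑ i ∈ Finset.range n, g (shiftN^[i] x)
        = φ (fun a => ((factorN x 0 n).count a : ℝ)) := by
      rw [factorN_count, map_sum]
      refine Finset.sum_congr rfl fun i _ => ?_
      simp [hgdef, shiftN_iterate_apply]
    rw [h2]
    apply hC
    refine ⟨x, hx, 0, ?_⟩
    have hlen : (factorN x 0 n).length = n := by simp [factorN]
    rw [hlen]
  obtain ⟨u, hucont, hucoc⟩ :=
    gottschalk_hedlund X hXc hne shiftN hScont hSinv hmin' g hgcont C hbd
  refine ⟨fun z => ((u z.val : ℝ) : AddCircle (1:ℝ)), ?_, ?_⟩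
  · exact (AddCircle.continuous_mk' 1).comp
      (continuousOn_iff_continuous_restrict.mp hucont)
  · intro x
    have h1 : u (shiftN x.val) = u x.val + g x.val := hucoc x.val x.2
    show ((u (shiftN x.val) : ℝ) : AddCircle (1:ℝ)) = _
    rw [h1]
    have hadd : ((u x.val + g x.val : ℝ) : AddCircle (1:ℝ))
        = ((u x.val : ℝ) : AddCircle (1:ℝ)) + ((g x.val : ℝ) : AddCircle (1:ℝ)) := rfl
    rw [hadd]
    congr 1
    obtain ⟨m, hm⟩ := hcong (x.val 0) a
    refine (QuotientAddGroup.eq (s := AddSubgroup.zmultiples (1:ℝ))).mpr ?_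
    refine ⟨-m, ?_⟩
    have : g x.val = φ (Pi.single (x.val 0) 1) := rfl
    simp only [zsmul_eq_mul, mul_one, Int.cast_neg]
    rw [this]
    linarith
end

section
/- Let σ be a primitive substitution on alphabet A with incidence matrix M. Then the return space R(X_σ) (the span of abelianization vectors of return words of the subshift X_σ) satisfies M·R(X_σ) ⊆ R(X_σ), i.e., the image under σ of any return word is a concatenation of return words, so its abelianization lies in R(X_σ). -/
/-!
The image under `σ` of a return word `a u` to `a` is a word `b t` that is again followed by
its first letter `b` in the language, since `σ(a u a) = b t b ⋯`. Cutting `b t` at the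
occurrences of `b` writes it as a concatenation of return words to `b`, and abelianization
turns concatenation into addition; finally `M · ab(w) = ab(σ(w))`.
-/

open Matrix

/-- `n`-th iterate of the substitution `σ` applied to the letter `a`. -/
def substIter {A : Type*} (σ : A → List A) (n : ℕ) (a : A) : List A :=
  (fun l => l.flatMap σ)^[n] [a]

/-- The language of a substitution: factors of the words `σ^n(a)`. -/
def langSubst {A : Type*} (σ : A → List A) : Set (List A) :=
  {w | ∃ (a : A) (n : ℕ), w <:+: substIter σ n a}

/-- A substitution is primitive if it is non-erasing and some iterate of every letter
contains every letter. -/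
def IsPrimitive {A : Type*} (σ : A → List A) : Prop :=
  (∀ a, σ a ≠ []) ∧ ∃ n : ℕ, ∀ a b : A, b ∈ substIter σ n a

/-- `w` is a return word for the language `L`. -/
def IsReturnWord {A : Type*} [DecidableEq A] (L : Set (List A)) (w : List A) : Prop :=
  ∃ (a : A) (u : List A), w = a :: u ∧ w ++ [a] ∈ L ∧ w.count a = 1

/-- The abelianization vector of a word, as a vector of `ℝ^A`. -/
def abel {A : Type*} [DecidableEq A] (w : List A) : A → ℝ := fun a => (w.count a : ℝ)

/-- The incidence matrix of a substitution: `M a b = |σ(b)|_a`. -/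
def incidence {A : Type*} [DecidableEq A] (σ : A → List A) : Matrix A A ℝ :=
  fun a b => ((σ b).count a : ℝ)

section Abelianization

variable {A : Type*} [DecidableEq A]

@[simp]
lemma abel_nil : abel ([] : List A) = 0 := by
  funext a
  simp [abel]

lemma abel_append (u v : List A) : abel (u ++ v) = abel u + abel v := by
  funext a
  simp [abel, List.count_append]

lemma incidence_mulVec_abel_singleton [Fintype A] (σ : A → List A) (c : A) :
    incidence σ *ᵥ abel [c] = abel (σ c) := by
  funext a
  simp [mulVec, dotProduct, abel, incidence, List.count_singleton]

lemma incidence_mulVec_abel [Fintype A] (σ : A → List A) (w : List A) :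
    incidence σ *ᵥ abel w = abel (w.flatMap σ) := by
  induction w with
  | nil => simp
  | cons c t ih =>
    rw [← List.singleton_append, abel_append, mulVec_add, ih, incidence_mulVec_abel_singleton,
      List.flatMap_append, abel_append, List.flatMap_singleton]

end Abelianization

section ReturnSpace

variable {A : Type*} [DecidableEq A]

def returnSpace (L : Set (List A)) : Submodule ℝ (A → ℝ) :=
  Submodule.span ℝ (abel '' {w | IsReturnWord L w})

lemma abel_mem_returnSpace_of_isReturnWord {L : Set (List A)} {w : List A}
    (hw : IsReturnWord L w) : abel w ∈ returnSpace L :=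
  Submodule.subset_span ⟨w, hw, rfl⟩

theorem abel_mem_returnSpace {L : Set (List A)}
    (hL : ∀ ⦃u w : List A⦄, u <:+: w → w ∈ L → u ∈ L) (b : A) (t : List A)
    (h : b :: t ++ [b] ∈ L) : abel (b :: t) ∈ returnSpace L := by
  by_cases hb : b ∈ t
  · obtain ⟨t₁, t₂, rfl, hb₁⟩ := List.eq_append_cons_of_mem hb
    have hsplit : b :: (t₁ ++ b :: t₂) ++ [b] = b :: t₁ ++ [b] ++ (t₂ ++ [b]) := by simp
    have hreturn : IsReturnWord L (b :: t₁) := by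
      refine ⟨b, t₁, rfl, hL ?_ h, by simp [List.count_eq_zero.2 hb₁]⟩
      rw [hsplit]
      exact List.infix_append [] _ _
    have hrest : b :: t₂ ++ [b] ∈ L := hL ⟨b :: t₁, [], by simp⟩ h
    rw [show b :: (t₁ ++ b :: t₂) = b :: t₁ ++ b :: t₂ by simp, abel_append]
    exact add_mem (abel_mem_returnSpace_of_isReturnWord hreturn)
      (abel_mem_returnSpace hL b t₂ hrest)
  · exact abel_mem_returnSpace_of_isReturnWord
      ⟨b, t, rfl, h, by simp [List.count_eq_zero.2 hb]⟩
termination_by t.length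

theorem abel_flatMap_mem_returnSpace {L : Set (List A)} {σ : A → List A}
    (hne : ∀ a, σ a ≠ []) (hL : ∀ ⦃u w : List A⦄, u <:+: w → w ∈ L → u ∈ L)
    (hσL : ∀ w ∈ L, w.flatMap σ ∈ L) {w : List A} (hw : IsReturnWord L w) :
    abel (w.flatMap σ) ∈ returnSpace L := by
  obtain ⟨a, u, rfl, hwa, -⟩ := hw
  obtain ⟨b, r, hσa⟩ := List.exists_cons_of_ne_nil (hne a)
  have himage : (a :: u ++ [a]).flatMap σ = b :: (r ++ u.flatMap σ) ++ [b] ++ r := by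
    simp [hσa]
  have hprefix : b :: (r ++ u.flatMap σ) ++ [b] ∈ L :=
    hL (List.infix_append [] _ r) (himage ▸ hσL _ hwa)
  simpa [hσa] using abel_mem_returnSpace hL b _ hprefix

end ReturnSpace

section SubstitutionLanguage

variable {A : Type*}

lemma langSubst_of_infix (σ : A → List A) {u w : List A} (h : u <:+: w)
    (hw : w ∈ langSubst σ) : u ∈ langSubst σ := by
  obtain ⟨a, n, hn⟩ := hw
  exact ⟨a, n, h.trans hn⟩

lemma flatMap_mem_langSubst (σ : A → List A) {w : List A} (hw : w ∈ langSubst σ) :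
    w.flatMap σ ∈ langSubst σ := by
  obtain ⟨a, n, s, t, hst⟩ := hw
  refine ⟨a, n + 1, s.flatMap σ, t.flatMap σ, ?_⟩
  rw [substIter, Function.iterate_succ_apply', ← substIter, ← hst]
  simp

end SubstitutionLanguage

/-- The return space of the subshift of a primitive substitution is invariant under
the incidence matrix: `M · R(X_σ) ⊆ R(X_σ)`. -/
theorem incidence_maps_returnSpace_to_returnSpace
    {A : Type*} [Fintype A] [DecidableEq A]
    (σ : A → List A) (hprim : IsPrimitive σ) :
    ∀ v ∈ Submodule.span ℝ (abel '' {w | IsReturnWord (langSubst σ) w}),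
      (incidence σ).mulVec v ∈
        Submodule.span ℝ (abel '' {w | IsReturnWord (langSubst σ) w}) := by
  intro v hv
  suffices returnSpace (langSubst σ) ≤ (returnSpace (langSubst σ)).comap (incidence σ).mulVecLin
    from this hv
  refine Submodule.span_le.2 ?_
  rintro _ ⟨w, hw, rfl⟩
  simpa [incidence_mulVec_abel] using
    abel_flatMap_mem_returnSpace hprim.1 (fun _ _ h hw ↦ langSubst_of_infix σ h hw)
      (fun _ hw ↦ flatMap_mem_langSubst σ hw) hw
end

section
/- Let (X,S) be a minimal subshift over a finite alphabet A, and let c : A* → ℝ/ℤ be a coboundary (a monoid morphism vanishing on all return words). Then there exists a monoid morphism c̃ : A* → ℝ which is a real coboundary (vanishes on abelianizations of all return words) and satisfies c̃(w) ≡ c(w) (mod ℤ) for every word w in the language of X. -/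
/-!
Minimality of `X` enters only through irreducibility of its language `L`: for `u, v ∈ L` some
`u m v` lies in `L`. Since `L` is factor-closed, a word followed by its own first letter is a
product of return words, so `c` vanishes on it. Fix a letter `a` of `L`. For every letter `b`,
the value `γ b := c (b u)` over words with `b u a ∈ L` does not depend on `u`: a word
`b u a m b u' a ∈ L` gives `c (b u a m) = 0 = c (a m b u')`. Then `c b = γ b - γ b'` whenever
`b b' ∈ L`. With real representatives, `c̃ b := out (γ b) - out (γ b - c b)` is congruent to
`c b`, and equals `out (γ b) - out (γ b')` whenever `b b' ∈ L`, so it telescopes to zero along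
every return word.
-/

section Words

open List

variable {A : Type*}

def IsFactorClosed (L : Set (List A)) : Prop :=
  ∀ ⦃v w : List A⦄, v <:+: w → w ∈ L → v ∈ L

def IsIrreducibleLanguage (L : Set (List A)) : Prop :=
  ∀ ⦃u v : List A⦄, u ∈ L → v ∈ L → ∃ m, u ++ m ++ v ∈ L

def IsTransferFunction {G : Type*} [AddGroup G] (L : Set (List A)) (c γ : A → G) : Prop :=
  ∀ ⦃b b' : A⦄, [b, b'] ∈ L → c b = γ b - γ b'

section Language

variable {L : Set (List A)} {G : Type*}

/-- A word `a u` followed by its first letter cuts into return words at the occurrences of `a`. -/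
theorem IsFactorClosed.sum_eq_zero_of_cons_append_singleton [DecidableEq A] [AddMonoid G]
    {c : A → G} (hL : IsFactorClosed L) (hc : ∀ w, IsReturnWord L w → (w.map c).sum = 0)
    (a : A) (u : List A) (hu : a :: u ++ [a] ∈ L) : ((a :: u).map c).sum = 0 := by
  induction hn : u.length using Nat.strong_induction_on generalizing u with
  | _ n ih =>
    by_cases ha : a ∈ u
    · obtain ⟨s, t, rfl⟩ := append_of_mem ha
      have hs : a :: s ++ [a] ∈ L := hL ⟨[], t ++ [a], by simp⟩ hu
      have ht : a :: t ++ [a] ∈ L := hL ⟨a :: s, [], by simp⟩ hu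
      rw [← cons_append, map_append, sum_append, ih _ (by simp [← hn]) s hs rfl,
        ih _ (by simp [← hn]; omega) t ht rfl, add_zero]
    · exact hc _ ⟨a, u, rfl, hu, by simp [count_eq_zero.2 ha]⟩

theorem IsTransferFunction.sum_eq_sub [AddGroup G] {c γ : A → G} (hγ : IsTransferFunction L c γ)
    (hL : IsFactorClosed L) (a : A) (u : List A) (b : A) (h : a :: u ++ [b] ∈ L) :
    ((a :: u).map c).sum = γ a - γ b := by
  induction u generalizing a with
  | nil => simpa using hγ h
  | cons a' u ih =>
    rw [map_cons, sum_cons, hγ (hL ⟨[], u ++ [b], rfl⟩ h), ih a' (hL ⟨[a], [], by simp⟩ h),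
      sub_add_sub_cancel]

theorem IsTransferFunction.sum_eq_zero_of_isReturnWord [DecidableEq A] [AddGroup G]
    {c γ : A → G} (hγ : IsTransferFunction L c γ) (hL : IsFactorClosed L) {w : List A}
    (hw : IsReturnWord L w) : (w.map c).sum = 0 := by
  obtain ⟨a, u, rfl, h, -⟩ := hw
  rw [hγ.sum_eq_sub hL a u a h, sub_self]

theorem sum_eq_sum_of_cons_append_singleton [DecidableEq A] [AddGroup G] {c : A → G}
    (hL : IsFactorClosed L) (hirr : IsIrreducibleLanguage L)
    (hc : ∀ w, IsReturnWord L w → (w.map c).sum = 0) {a b : A} {u u' : List A}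
    (hu : b :: u ++ [a] ∈ L) (hu' : b :: u' ++ [a] ∈ L) :
    ((b :: u).map c).sum = ((b :: u').map c).sum := by
  obtain ⟨m, hm⟩ := hirr hu hu'
  have h₁ := hL.sum_eq_zero_of_cons_append_singleton hc b (u ++ a :: m)
    (hL ⟨[], u' ++ [a], by simp⟩ hm)
  have h₂ := hL.sum_eq_zero_of_cons_append_singleton hc a (m ++ b :: u')
    (hL ⟨b :: u, [], by simp⟩ hm)
  rw [← cons_append, map_append, sum_append] at h₁ h₂
  exact (eq_neg_of_add_eq_zero_left h₁).trans (neg_eq_of_add_eq_zero_right h₂)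

theorem exists_isTransferFunction [DecidableEq A] [AddGroup G] {c : A → G}
    (hL : IsFactorClosed L) (hirr : IsIrreducibleLanguage L)
    (hc : ∀ w, IsReturnWord L w → (w.map c).sum = 0) : ∃ γ, IsTransferFunction L c γ := by
  by_cases hL₁ : ∃ a, [a] ∈ L
  swap
  · exact ⟨0, fun b b' h => (hL₁ ⟨b, hL ⟨[], [b'], rfl⟩ h⟩).elim⟩
  obtain ⟨a, ha⟩ := hL₁
  -- `γ b` is the value of `c` on any word of `L` that starts with `b` and is followed by `a`.
  have hval : ∀ b, ∃ t : G, ∀ u, b :: u ++ [a] ∈ L → ((b :: u).map c).sum = t := by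
    intro b
    by_cases hb : ∃ u, b :: u ++ [a] ∈ L
    · obtain ⟨u, hu⟩ := hb
      exact ⟨_, fun u' hu' => sum_eq_sum_of_cons_append_singleton hL hirr hc hu' hu⟩
    · exact ⟨0, fun u hu => (hb ⟨u, hu⟩).elim⟩
  choose γ hγ using hval
  refine ⟨γ, fun b b' hbb' => ?_⟩
  obtain ⟨m, hm⟩ := hirr hbb' ha
  rw [← hγ b (b' :: m) hm, ← hγ b' m (hL ⟨[b], [], by simp⟩ hm), map_cons, sum_cons,
    add_sub_cancel_right]

theorem IsTransferFunction.out {M : Type*} [AddCommGroup M] {H : AddSubgroup M}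
    {c γ : A → M ⧸ H} (hγ : IsTransferFunction L c γ) :
    IsTransferFunction L (fun b => (γ b).out - (γ b - c b).out) (fun b => (γ b).out) := by
  intro b b' h
  simp only [hγ h, sub_sub_cancel]

end Language

section Subshift

theorem shiftN_iterate (x : ℕ → A) (n : ℕ) : shiftN^[n] x = fun i => x (n + i) := by
  induction n generalizing x with
  | zero => simp
  | succ n ih => funext i; simp [ih (shiftN x), shiftN, Nat.add_right_comm, Nat.add_assoc]

theorem factorN_length (x : ℕ → A) (k l : ℕ) : (factorN x k l).length = l := by
  simp [factorN]

theorem factorN_add (x : ℕ → A) (k m n : ℕ) :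
    factorN x k (m + n) = factorN x k m ++ factorN x (k + m) n := by
  simp [factorN, range_add, Nat.add_assoc]

theorem isFactorClosed_languageN (X : Set (ℕ → A)) : IsFactorClosed (languageN X) := by
  rintro v w ⟨s, t, rfl⟩ ⟨x, hx, k, hw⟩
  refine ⟨x, hx, k + s.length, ?_⟩
  rw [length_append, length_append, factorN_add, factorN_add] at hw
  obtain ⟨hsv, -⟩ := append_inj hw (by simp [factorN_length])
  exact (append_inj hsv (factorN_length ..).symm).2

variable [TopologicalSpace A] [DiscreteTopology A]

theorem exists_eq_on_of_minimal {X : Set (ℕ → A)}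
    (hmin : ∀ x ∈ X, closure {y | ∃ n : ℕ, y = shiftN^[n] x} = X)
    {x y : ℕ → A} (hx : x ∈ X) (hy : y ∈ X) (n : ℕ) : ∃ p, ∀ i < n, x (p + i) = y i := by
  have hcyl : IsOpen ((Set.Iio n).pi fun i => {y i}) :=
    isOpen_set_pi (Set.finite_Iio n) fun _ _ => isOpen_discrete _
  rw [← hmin x hx] at hy
  obtain ⟨_, hz, p, rfl⟩ := mem_closure_iff.mp hy _ hcyl fun i _ => rfl
  exact ⟨p, fun i hi => by simpa [shiftN_iterate] using hz i hi⟩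

theorem isIrreducibleLanguage_languageN {X : Set (ℕ → A)} (hinv : ∀ x ∈ X, shiftN x ∈ X)
    (hmin : ∀ x ∈ X, closure {y | ∃ n : ℕ, y = shiftN^[n] x} = X) :
    IsIrreducibleLanguage (languageN X) := by
  rintro u v ⟨x, hx, k, hu⟩ ⟨y, hy, j, hv⟩
  have hmaps : Set.MapsTo shiftN X X := hinv
  obtain ⟨p, hp⟩ := exists_eq_on_of_minimal hmin (hmaps.iterate (k + u.length) hx)
    (hmaps.iterate j hy) v.length
  refine ⟨factorN x (k + u.length) p, x, hx, k, ?_⟩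
  rw [length_append, length_append, factorN_length, factorN_add, factorN_add, ← hu]
  refine congrArg _ (hv.trans (map_congr_left fun i hi => ?_))
  simpa [shiftN_iterate, Nat.add_assoc] using (hp i (mem_range.1 hi)).symm

end Subshift

end Words

theorem coboundary_has_real_representative_general
    {A : Type*} [DecidableEq A]
    [TopologicalSpace A] [DiscreteTopology A]
    (X : Set (ℕ → A))
    (hinv : ∀ x ∈ X, shiftN x ∈ X)
    (hmin : ∀ x ∈ X, closure {y | ∃ n : ℕ, y = shiftN^[n] x} = X)
    (c : A → AddCircle (1 : ℝ))
    (hc : ∀ w, IsReturnWord (languageN X) w → (w.map c).sum = 0) :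
    ∃ ct : A → ℝ,
      (∀ w, IsReturnWord (languageN X) w → (w.map ct).sum = 0) ∧
      ∀ w ∈ languageN X, (((w.map ct).sum : ℝ) : AddCircle (1 : ℝ)) = (w.map c).sum := by
  have hL := isFactorClosed_languageN X
  obtain ⟨γ, hγ⟩ := exists_isTransferFunction hL (isIrreducibleLanguage_languageN hinv hmin) hc
  refine ⟨fun b => (γ b).out - (γ b - c b).out,
    fun w hw => hγ.out.sum_eq_zero_of_isReturnWord hL hw, fun w _ => ?_⟩
  rw [← QuotientAddGroup.mk'_apply, map_list_sum, List.map_map]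
  congr 1
  refine List.map_congr_left fun b _ => ?_
  simp [QuotientAddGroup.mk_sub, sub_sub_cancel]

/-- Every coboundary `c : A* → ℝ/ℤ` of a minimal subshift has a representative
`c̃ : A* → ℝ` which is a real coboundary, i.e. `c̃` vanishes on all return words and
`c̃(w) ≡ c(w) mod ℤ` for every word `w` in the language. (Morphisms are described by
their values on letters, extended additively to words.) -/
theorem coboundary_has_real_representative
    {A : Type*} [Fintype A] [DecidableEq A]
    [TopologicalSpace A] [DiscreteTopology A]
    (X : Set (ℕ → A)) (hne : X.Nonempty) (hcl : IsClosed X)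
    (hinv : ∀ x ∈ X, shiftN x ∈ X)
    (hmin : ∀ x ∈ X, closure {y | ∃ n : ℕ, y = shiftN^[n] x} = X)
    (c : A → AddCircle (1 : ℝ))
    (hc : ∀ w, IsReturnWord (languageN X) w → (w.map c).sum = 0) :
    ∃ ct : A → ℝ,
      (∀ w, IsReturnWord (languageN X) w → (w.map ct).sum = 0) ∧
      ∀ w ∈ languageN X, (((w.map ct).sum : ℝ) : AddCircle (1 : ℝ)) = (w.map c).sum :=
  coboundary_has_real_representative_general X hinv hmin c hc
end

section
/- Let σ be a primitive substitution with incidence matrix M, and let a be a letter of its alphabet. Let R be the return space of X_σ, R_a the span of abelianizations of return words on the letter a, and I = ⋂_{n∈ℕ} M^n ℚ^A the eventual image. Then I ∩ R = I ∩ R_a, and consequently R^∘ + E_0 = R_a^∘ + E_0 where E_0 = I^∘ is the generalized left-eigenspace of M for eigenvalue 0. -/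
open Matrix

/-- `w` is a return word on the letter `a` for the language `L`. -/
def IsReturnWordOn {A : Type*} [DecidableEq A] (L : Set (List A)) (a : A) (w : List A) : Prop :=
  IsReturnWord L w ∧ ∃ u, w = a :: u

/-- The abelianization vector of a word, as a vector of `ℚ^A`. -/
def abelQ {A : Type*} [DecidableEq A] (w : List A) : A → ℚ := fun b => (w.count b : ℚ)

/-- The rational incidence matrix of a substitution: `M a b = |σ(b)|_a`. -/
def incidenceQ {A : Type*} [DecidableEq A] (σ : A → List A) : Matrix A A ℚ :=
  fun a b => ((σ b).count a : ℚ)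

set_option linter.unusedSectionVars false
section Aux
variable {A : Type*} [Fintype A] [DecidableEq A] (σ : A → List A)

lemma abelQ_append (u v : List A) : abelQ (u ++ v) = abelQ u + abelQ v := by
  funext b; simp [abelQ, List.count_append]

lemma mulVec_abelQ (w : List A) :
    (incidenceQ σ).mulVec (abelQ w) = abelQ (w.flatMap σ) := by
  induction w with
  | nil => funext b; simp [abelQ, Matrix.mulVec, dotProduct]
  | cons c w ih =>
    have : (c :: w) = [c] ++ w := rfl
    rw [this, abelQ_append, List.flatMap_append, abelQ_append, Matrix.mulVec_add, ih]
    congr 1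
    funext b
    simp only [Matrix.mulVec, dotProduct, abelQ, incidenceQ]
    rw [Finset.sum_eq_single c]
    · simp
    · intro d _ hd
      have : [c].count d = 0 := List.count_eq_zero_of_not_mem (by simp [hd])
      simp [this]
    · simp

lemma pow_mulVec_abelQ (k : ℕ) (w : List A) :
    ((incidenceQ σ) ^ k).mulVec (abelQ w) = abelQ ((fun l => l.flatMap σ)^[k] w) := by
  induction k with
  | zero => simp
  | succ k ih =>
    rw [pow_succ', ← Matrix.mulVec_mulVec, ih, mulVec_abelQ, Function.iterate_succ_apply']

lemma mem_lang_of_infix {u w : List A} (h : u <:+: w) (hw : w ∈ langSubst σ) :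
    u ∈ langSubst σ := by
  obtain ⟨c, n, hn⟩ := hw
  exact ⟨c, n, h.trans hn⟩

lemma flatMap_mem_lang {w : List A} (hw : w ∈ langSubst σ) : w.flatMap σ ∈ langSubst σ := by
  obtain ⟨c, n, s, t, h⟩ := hw
  refine ⟨c, n + 1, s.flatMap σ, t.flatMap σ, ?_⟩
  rw [substIter, Function.iterate_succ_apply']
  show _ = (substIter σ n c).flatMap σ
  rw [← h]; simp

lemma iter_mem_lang (k : ℕ) {w : List A} (hw : w ∈ langSubst σ) :
    (fun l => l.flatMap σ)^[k] w ∈ langSubst σ := by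
  induction k with
  | zero => exact hw
  | succ k ih => rw [Function.iterate_succ_apply']; exact flatMap_mem_lang σ ih

lemma iter_append (k : ℕ) (x y : List A) :
    (fun l => l.flatMap σ)^[k] (x ++ y)
      = (fun l => l.flatMap σ)^[k] x ++ (fun l => l.flatMap σ)^[k] y := by
  induction k generalizing x y with
  | zero => rfl
  | succ k ih => simp only [Function.iterate_succ_apply, List.flatMap_append]; exact ih _ _

/-- Decomposition into return words on `d`. -/
lemma abel_mem_span_returnOn (d : A) :
    ∀ (n : ℕ) (t : List A), t.length ≤ n → (d :: t) ++ [d] ∈ langSubst σ →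
      abelQ (d :: t) ∈ Submodule.span ℚ (abelQ '' {w | IsReturnWordOn (langSubst σ) d w}) := by
  intro n
  induction n with
  | zero =>
    intro t ht hL
    have ht' : t = [] := List.eq_nil_of_length_eq_zero (Nat.le_zero.mp ht)
    subst ht'
    refine Submodule.subset_span ⟨[d], ⟨⟨d, [], rfl, hL, by simp⟩, [], rfl⟩, rfl⟩
  | succ n ih =>
    intro t ht hL
    by_cases hd : d ∈ t
    · obtain ⟨t1, t2, rfl⟩ := List.append_of_mem hd
      have hlen : t1.length + (t2.length + 1) = (t1 ++ d :: t2).length := by simp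
      have h1 : (d :: t1) ++ [d] ∈ langSubst σ := by
        refine mem_lang_of_infix σ ⟨[], t2 ++ [d], ?_⟩ hL
        simp
      have h2 : (d :: t2) ++ [d] ∈ langSubst σ := by
        refine mem_lang_of_infix σ ⟨d :: t1, [], ?_⟩ hL
        simp
      have e1 := ih t1 (by omega) h1
      have e2 := ih t2 (by omega) h2
      have : abelQ (d :: (t1 ++ d :: t2)) = abelQ (d :: t1) + abelQ (d :: t2) := by
        funext b; simp [abelQ, List.count_cons, List.count_append]; ring
      rw [this]
      exact Submodule.add_mem _ e1 e2
    · refine Submodule.subset_span ⟨d :: t, ⟨⟨d, t, rfl, hL, ?_⟩, t, rfl⟩, rfl⟩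
      simp [List.count_cons, List.count_eq_zero_of_not_mem hd]


lemma Ra_le_R (d : A) :
    Submodule.span ℚ (abelQ '' {w | IsReturnWordOn (langSubst σ) d w}) ≤
      Submodule.span ℚ (abelQ '' {w : List A | IsReturnWord (langSubst σ) w}) :=
  Submodule.span_mono (Set.image_mono fun _ hw => hw.1)

/-- `M` maps the return space into itself. -/
lemma mapR (hne : ∀ b, σ b ≠ []) {v : A → ℚ}
    (hv : v ∈ Submodule.span ℚ (abelQ '' {w : List A | IsReturnWord (langSubst σ) w})) :
    (incidenceQ σ).mulVec v ∈
      Submodule.span ℚ (abelQ '' {w : List A | IsReturnWord (langSubst σ) w}) := by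
  induction hv using Submodule.span_induction with
  | mem x hx =>
    obtain ⟨w, hw, rfl⟩ := hx
    obtain ⟨c, u, rfl, hL, hcount⟩ := hw
    rw [mulVec_abelQ]
    obtain ⟨d, rest, hcd⟩ := List.exists_cons_of_ne_nil (hne c)
    have hflat : ((c :: u) ++ [c]).flatMap σ ∈ langSubst σ := flatMap_mem_lang σ hL
    rw [List.flatMap_append] at hflat
    have hshape : (c :: u).flatMap σ = d :: (rest ++ u.flatMap σ) := by
      show σ c ++ u.flatMap σ = _
      rw [hcd]; simp
    have hLd : (d :: (rest ++ u.flatMap σ)) ++ [d] ∈ langSubst σ := by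
      refine mem_lang_of_infix σ ⟨[], rest, ?_⟩ hflat
      rw [hshape]
      show (d :: (rest ++ u.flatMap σ) ++ [d]) ++ rest = _
      simp [List.flatMap, hcd]
    have := abel_mem_span_returnOn σ d (rest ++ u.flatMap σ).length _ le_rfl hLd
    rw [hshape]
    exact Ra_le_R σ d this
  | zero => simp
  | add x y _ _ hx hy => rw [Matrix.mulVec_add]; exact Submodule.add_mem _ hx hy
  | smul c x _ hx => rw [Matrix.mulVec_smul]; exact Submodule.smul_mem _ _ hx

lemma mapR_pow (hne : ∀ b, σ b ≠ []) (n : ℕ) {v : A → ℚ}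
    (hv : v ∈ Submodule.span ℚ (abelQ '' {w : List A | IsReturnWord (langSubst σ) w})) :
    ((incidenceQ σ) ^ n).mulVec v ∈
      Submodule.span ℚ (abelQ '' {w : List A | IsReturnWord (langSubst σ) w}) := by
  induction n with
  | zero => simpa using hv
  | succ n ih => rw [pow_succ', ← Matrix.mulVec_mulVec]; exact mapR σ hne ih

/-- `M^k` maps the return space into the return space on `a`, where `k` witnesses
primitivity. -/
lemma mapRa (a : A) {k : ℕ} (hk : ∀ c b : A, b ∈ substIter σ k c) {v : A → ℚ}
    (hv : v ∈ Submodule.span ℚ (abelQ '' {w : List A | IsReturnWord (langSubst σ) w})) :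
    ((incidenceQ σ) ^ k).mulVec v ∈
      Submodule.span ℚ (abelQ '' {w | IsReturnWordOn (langSubst σ) a w}) := by
  induction hv using Submodule.span_induction with
  | mem x hx =>
    obtain ⟨w, hw, rfl⟩ := hx
    obtain ⟨c, u, rfl, hL, hcount⟩ := hw
    rw [pow_mulVec_abelQ]
    obtain ⟨p, s, hps⟩ := List.append_of_mem (hk c a)
    set It : List A → List A := (fun l => l.flatMap σ)^[k] with hIt
    have hWc : It (c :: u) = p ++ a :: (s ++ It u) := by
      have : (c :: u) = [c] ++ u := rfl
      rw [this, hIt, iter_append]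
      show substIter σ k c ++ _ = _
      rw [hps]; simp
    have hfull : It ((c :: u) ++ [c]) ∈ langSubst σ := iter_mem_lang σ k hL
    have hfull' : It ((c :: u) ++ [c]) =
        p ++ (a :: (s ++ It u ++ p) ++ [a]) ++ s := by
      rw [hIt, iter_append, ← hIt, hWc]
      show _ ++ substIter σ k c = _
      rw [hps]; simp
    have hLa : (a :: (s ++ It u ++ p)) ++ [a] ∈ langSubst σ := by
      refine mem_lang_of_infix σ ⟨p, s, ?_⟩ hfull
      rw [hfull']
    have hmem := abel_mem_span_returnOn σ a (s ++ It u ++ p).length _ le_rfl hLa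
    have habel : abelQ (It (c :: u)) = abelQ (a :: (s ++ It u ++ p)) := by
      rw [hWc]
      have e1 : p ++ a :: (s ++ It u) = p ++ ([a] ++ (s ++ It u)) := rfl
      have e2 : a :: (s ++ It u ++ p) = [a] ++ ((s ++ It u) ++ p) := by simp
      rw [e1, e2]
      simp only [abelQ_append]
      abel
    rw [habel]
    exact hmem
  | zero => simp
  | add x y _ _ hx hy => rw [Matrix.mulVec_add]; exact Submodule.add_mem _ hx hy
  | smul c x _ hx => rw [Matrix.mulVec_smul]; exact Submodule.smul_mem _ _ hx


lemma mulVecLin_pow' (M : Matrix A A ℚ) (n : ℕ) :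
    (M ^ n).mulVecLin = M.mulVecLin ^ n := by
  induction n with
  | zero => exact LinearMap.ext fun v => by simp
  | succ n ih =>
    rw [pow_succ, Matrix.mulVecLin_mul, ih, pow_succ, Module.End.mul_eq_comp]

end Aux


/-- For a primitive substitution and a letter `a`: on the eventual image
`I = ⋂ₙ Mⁿ ℚ^A`, the return space `R` coincides with the return space on `a`, and
consequently `R∘ + E₀ = R_a∘ + E₀`, where `E₀` is the generalized left-eigenspace of the
incidence matrix for the eigenvalue `0`. -/
theorem returnSpace_eq_returnSpaceOn_on_eventualImage
    {A : Type*} [Fintype A] [DecidableEq A]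
    (σ : A → List A) (hprim : IsPrimitive σ) (a : A) :
    let M := incidenceQ σ
    let I : Set (A → ℚ) := {v | ∀ n : ℕ, ∃ u, (M ^ n).mulVec u = v}
    let R : Submodule ℚ (A → ℚ) :=
      Submodule.span ℚ (abelQ '' {w | IsReturnWord (langSubst σ) w})
    let Ra : Submodule ℚ (A → ℚ) :=
      Submodule.span ℚ (abelQ '' {w | IsReturnWordOn (langSubst σ) a w})
    ({v | v ∈ I ∧ v ∈ R} = {v | v ∈ I ∧ v ∈ Ra}) ∧
    (∀ c : A → ℚ,
      (∃ r e : A → ℚ, (∀ v ∈ R, r ⬝ᵥ v = 0) ∧ (∃ n : ℕ, e ᵥ* (M ^ n) = 0) ∧ c = r + e) ↔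
      (∃ r e : A → ℚ, (∀ v ∈ Ra, r ⬝ᵥ v = 0) ∧ (∃ n : ℕ, e ᵥ* (M ^ n) = 0) ∧ c = r + e)) := by
  intro M I R Ra
  obtain ⟨hne, k, hk⟩ := hprim
  set f := M.mulVecLin with hf
  have hfp : ∀ (n : ℕ) (v : A → ℚ), (f ^ n) v = (M ^ n).mulVec v := by
    intro n v; rw [hf, ← mulVecLin_pow']; rfl
  obtain ⟨N, hN⟩ := Filter.eventually_atTop.mp
    (f.eventually_isCompl_ker_pow_range_pow.and
      (f.eventually_iInf_range_pow_eq.and f.eventually_iSup_ker_pow_eq))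
  have hcompl : IsCompl (LinearMap.ker (f ^ N)) (LinearMap.range (f ^ N)) := (hN N le_rfl).1
  have hrange : ∀ m, N ≤ m → LinearMap.range (f ^ m) = LinearMap.range (f ^ N) := by
    intro m hm; rw [← (hN m hm).2.1, (hN N le_rfl).2.1]
  have hker : ∀ m, N ≤ m → LinearMap.ker (f ^ m) = LinearMap.ker (f ^ N) := by
    intro m hm; rw [← (hN m hm).2.2, (hN N le_rfl).2.2]
  set J := LinearMap.range (f ^ N) with hJ
  set K := LinearMap.ker (f ^ N) with hK
  have hrange_le : ∀ {n m : ℕ}, n ≤ m →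
      LinearMap.range (f ^ m) ≤ LinearMap.range (f ^ n) := by
    intro n m h x hx
    obtain ⟨y, rfl⟩ := hx
    refine ⟨(f ^ (m - n)) y, ?_⟩
    rw [← Module.End.mul_apply, ← pow_add]
    congr 2
    omega
  have hIJ : I = ↑J := by
    ext v
    constructor
    · intro hv
      obtain ⟨u, hu⟩ := hv N
      exact ⟨u, by rw [hfp]; exact hu⟩
    · intro hv n
      have h1 : v ∈ LinearMap.range (f ^ max n N) := by
        rw [hrange _ (le_max_right n N)]; exact hv
      obtain ⟨u, hu⟩ := hrange_le (le_max_left n N) h1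
      exact ⟨u, by rw [← hfp]; exact hu⟩
  have hfJ : ∀ x ∈ J, f x ∈ J := by
    rintro x ⟨y, rfl⟩
    have h1 : f ((f ^ N) y) = (f ^ (N + 1)) y := by
      rw [pow_succ', Module.End.mul_apply]
    rw [h1, ← hrange (N + 1) (Nat.le_succ N)]
    exact LinearMap.mem_range_self _ y
  have hfInjJ : ∀ x ∈ J, f x = 0 → x = 0 := by
    rintro x ⟨y, rfl⟩ h0
    have h1 : y ∈ LinearMap.ker (f ^ (N + 1)) := by
      rw [LinearMap.mem_ker, pow_succ', Module.End.mul_apply, h0]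
    rw [hker (N + 1) (Nat.le_succ N), LinearMap.mem_ker] at h1
    exact h1
  -- the restricted endomorphism on S = J ⊓ R
  have hfS : ∀ x ∈ J ⊓ R, f x ∈ J ⊓ R := by
    intro x hx
    rw [Submodule.mem_inf] at hx ⊢
    refine ⟨hfJ x hx.1, ?_⟩
    have : f x = M.mulVec x := rfl
    rw [this]
    exact mapR σ hne hx.2
  set g : (J ⊓ R : Submodule ℚ (A → ℚ)) →ₗ[ℚ] (J ⊓ R : Submodule ℚ (A → ℚ)) :=
    f.restrict hfS with hg
  have hginj : Function.Injective g := by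
    intro x y hxy
    have h1 : f x.1 = f y.1 := by
      have := congrArg Subtype.val hxy
      rwa [hg, LinearMap.restrict_apply, LinearMap.restrict_apply] at this
    have h2 : f (x.1 - y.1) = 0 := by rw [map_sub, h1, sub_self]
    have h3 : x.1 - y.1 = 0 :=
      hfInjJ _ (Submodule.sub_mem _ (Submodule.mem_inf.mp x.2).1 (Submodule.mem_inf.mp y.2).1) h2
    exact Subtype.ext (sub_eq_zero.mp h3)
  have hgsurj : Function.Surjective g := LinearMap.injective_iff_surjective.mp hginj
  have hgpow : ∀ m : ℕ, Function.Surjective (⇑(g ^ m)) := by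
    intro m
    induction m with
    | zero => simpa [Module.End.one_eq_id] using Function.surjective_id
    | succ m ih =>
      rw [pow_succ, Module.End.mul_eq_comp, LinearMap.coe_comp]
      exact ih.comp hgsurj
  have hgfx : ∀ (m : ℕ) (x : (J ⊓ R : Submodule ℚ (A → ℚ))),
      ((g ^ m) x : A → ℚ) = (f ^ m) x.1 := by
    intro m x
    rw [hg, Module.End.pow_restrict, LinearMap.restrict_apply]
  have hSsurj : ∀ (m : ℕ) (v : A → ℚ), v ∈ J → v ∈ R →
      ∃ u, (u ∈ J ∧ u ∈ R) ∧ (f ^ m) u = v := by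
    intro m v hvJ hvR
    obtain ⟨u, hu⟩ := hgpow m ⟨v, Submodule.mem_inf.mpr ⟨hvJ, hvR⟩⟩
    refine ⟨u.1, Submodule.mem_inf.mp u.2, ?_⟩
    rw [← hgfx, hu]
  have part1 : {v | v ∈ I ∧ v ∈ R} = {v | v ∈ I ∧ v ∈ Ra} := by
    ext v
    simp only [Set.mem_setOf_eq]
    constructor
    · rintro ⟨hvI, hvR⟩
      refine ⟨hvI, ?_⟩
      have hvJ : v ∈ J := by rw [hIJ] at hvI; exact hvI
      obtain ⟨u, ⟨huJ, huR⟩, hu⟩ := hSsurj k v hvJ hvR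
      have h1 := mapRa σ a hk huR
      rw [← hu, hfp]
      exact h1
    · rintro ⟨hvI, hvR⟩
      exact ⟨hvI, Ra_le_R σ a hvR⟩
  refine ⟨part1, fun c => ⟨?_, ?_⟩⟩
  · rintro ⟨r, e, hr, he, rfl⟩
    exact ⟨r, e, fun v hv => hr v (Ra_le_R σ a hv), he, rfl⟩
  rintro ⟨r, e, hr, ⟨n, he⟩, rfl⟩
  set Q := max n N with hQ
  have hQN : N ≤ Q := le_max_right _ _
  have heQ : e ᵥ* (M ^ Q) = 0 := by
    have h1 : M ^ Q = M ^ n * M ^ (Q - n) := by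
      rw [← pow_add]; congr 1; omega
    rw [h1, ← Matrix.vecMul_vecMul, he, Matrix.zero_vecMul]
  have heJ : ∀ w ∈ J, e ⬝ᵥ w = 0 := by
    intro w hw
    rw [← hrange Q hQN] at hw
    obtain ⟨u, rfl⟩ := hw
    rw [hfp, Matrix.dotProduct_mulVec, heQ, zero_dotProduct]
  have hcompl' : IsCompl J K := hcompl.symm
  set π : (A → ℚ) →ₗ[ℚ] (J : Submodule ℚ (A → ℚ)) := J.linearProjOfIsCompl K hcompl' with hπ
  set ψ : (J : Submodule ℚ (A → ℚ)) →ₗ[ℚ] ℚ :=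
    { toFun := fun x => r ⬝ᵥ (x : A → ℚ)
      map_add' := by intro x y; simp [dotProduct_add]
      map_smul' := by intro m x; simp [dotProduct_smul] } with hψ
  set r' : A → ℚ := fun b => r ⬝ᵥ ((π (Pi.single b 1)) : A → ℚ) with hr'def
  have hφ : ∀ v : A → ℚ, r' ⬝ᵥ v = r ⬝ᵥ ((π v) : A → ℚ) := by
    intro v
    have hv : v = ∑ b : A, v b • (Pi.single b 1 : A → ℚ) := by
      funext i
      simp [Pi.single_apply, Finset.sum_ite_eq, mul_comm]
    calc r' ⬝ᵥ v = ∑ b : A, r' b * v b := rfl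
      _ = ∑ b : A, v b • (ψ (π (Pi.single b 1))) := by
          refine Finset.sum_congr rfl fun b _ => ?_
          rw [hψ]
          show r' b * v b = v b • (r ⬝ᵥ ((π (Pi.single b 1)) : A → ℚ))
          rw [hr'def, smul_eq_mul, mul_comm]
      _ = ψ (π v) := by
          conv_rhs => rw [hv]
          rw [_root_.map_sum, _root_.map_sum]
          refine Finset.sum_congr rfl fun b _ => ?_
          rw [_root_.map_smul, _root_.map_smul]
      _ = r ⬝ᵥ ((π v) : A → ℚ) := rfl
  have hπJ : ∀ w ∈ J, ((π w) : A → ℚ) = w := by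
    intro w hw
    have : π ((⟨w, hw⟩ : J) : A → ℚ) = ⟨w, hw⟩ :=
      Submodule.linearProjOfIsCompl_apply_left hcompl' ⟨w, hw⟩
    rw [show ((⟨w, hw⟩ : J) : A → ℚ) = w from rfl] at this
    rw [this]
  have hr' : ∀ v ∈ R, r' ⬝ᵥ v = 0 := by
    intro v hvR
    rw [hφ]
    set w : A → ℚ := ((π v) : A → ℚ) with hw
    have hwJ : w ∈ J := (π v).2
    have hvwK : v - w ∈ K := by
      have h1 := Submodule.projection_add_projection_eq_self hcompl' v
      have h2 : v - w = ((K.linearProjOfIsCompl J hcompl'.symm v) : A → ℚ) :=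
        sub_eq_iff_eq_add'.mpr h1.symm
      rw [h2]
      exact Submodule.coe_mem _
    have hfv : (f ^ N) v = (f ^ N) w := by
      have h0 : (f ^ N) (v - w) = 0 := hvwK
      rw [map_sub, sub_eq_zero] at h0
      exact h0
    have hfvR : (f ^ N) v ∈ R := by rw [hfp]; exact mapR_pow σ hne N hvR
    obtain ⟨u, ⟨huJ, huR⟩, hu⟩ := hSsurj N ((f ^ N) v) (LinearMap.mem_range_self _ v) hfvR
    have hwu : w = u := by
      have h0 : (f ^ N) (w - u) = 0 := by rw [map_sub, ← hfv, hu, sub_self]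
      have h1 : w - u ∈ K := h0
      have h2 : w - u ∈ J := Submodule.sub_mem _ hwJ huJ
      have h3 := Submodule.disjoint_def.mp hcompl.disjoint _ h1 h2
      exact sub_eq_zero.mp h3
    have huI : u ∈ I := by rw [hIJ]; exact huJ
    have huRa : u ∈ Ra := by
      have hmem : u ∈ {v | v ∈ I ∧ v ∈ R} := ⟨huI, huR⟩
      rw [part1] at hmem
      exact hmem.2
    rw [hwu]
    exact hr u huRa
  refine ⟨r', r + e - r', hr', ⟨Q, ?_⟩, by ring⟩
  have hann : ∀ w ∈ J, (r + e - r') ⬝ᵥ w = 0 := by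
    intro w hw
    have h1 : r' ⬝ᵥ w = r ⬝ᵥ w := by rw [hφ, hπJ w hw]
    have h2 := heJ w hw
    rw [sub_dotProduct, add_dotProduct, h1, h2]
    ring
  funext b
  have hcol : (M ^ Q) *ᵥ Pi.single b 1 ∈ J := by
    rw [← hfp, ← hrange Q hQN]
    exact LinearMap.mem_range_self _ _
  have h3 := hann _ hcol
  have h4 : ((r + e - r') ᵥ* (M ^ Q)) b = (r + e - r') ⬝ᵥ ((M ^ Q) *ᵥ Pi.single b 1) := by
    rw [Matrix.mulVec_single_one]
    rfl
  show ((r + e - r') ᵥ* (M ^ Q)) b = (0 : ℚ)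
  rw [h4]
  exact h3
end

section
/- Let M be a pseudo-unimodular square integer matrix (the product of its nonzero complex eigenvalues, with multiplicity, is ±1). Then Δ_M = {w ∈ ℚ^d : ∃n, w M^n ∈ ℤ^d} equals ℤ^d + E_0, where E_0 is the generalized left-eigenspace of M over ℚ for eigenvalue 0. -/
/-!
By Cayley–Hamilton, `M ^ k * q(M) = 0`, and writing `q(M) = M * B + c` with `c = q(0) = ±1`
gives `M ^ k = M ^ (k + 1) * S` for an integer matrix `S` commuting with `M`. Hence for
`N ≥ k` the matrix `S ^ N` is an integral inner inverse of `M ^ N`: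
`M ^ N * S ^ N * M ^ N = M ^ N`. If `w * M ^ n` is integral, so is `v = w * M ^ N` for
`N = k + n`, and then `z = v * S ^ N` is integral with `z * M ^ N = w * M ^ N`, so `w - z ∈ E₀`.
-/

open Matrix Polynomial

theorem pow_add_mul_pow_of_pow_eq_pow_succ_mul {G : Type*} [Monoid G] {a s : G} {k : ℕ}
    (h : a ^ k = a ^ (k + 1) * s) (m : ℕ) : a ^ (k + m) * s ^ m = a ^ k := by
  induction m with
  | zero => simp
  | succ m ih =>
    calc a ^ (k + (m + 1)) * s ^ (m + 1) = a ^ m * (a ^ (k + 1) * s) * s ^ m := by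
          rw [show k + (m + 1) = m + (k + 1) by omega, pow_add, pow_succ' s]
          simp only [mul_assoc]
      _ = a ^ k := by rw [← h, ← pow_add, Nat.add_comm m k, ih]

theorem Commute.pow_mul_pow_mul_pow_of_pow_eq_pow_succ_mul {G : Type*} [Monoid G] {a s : G}
    (hs : Commute a s) {k N : ℕ} (h : a ^ k = a ^ (k + 1) * s) (hN : k ≤ N) :
    a ^ N * s ^ N * a ^ N = a ^ N := by
  obtain ⟨j, rfl⟩ := Nat.exists_eq_add_of_le hN
  calc a ^ (k + j) * s ^ (k + j) * a ^ (k + j)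
      = a ^ j * (a ^ (k + (k + j)) * s ^ (k + j)) := by
        rw [mul_assoc, (hs.symm.pow_pow _ _).eq, ← mul_assoc, ← pow_add, ← mul_assoc, ← pow_add,
          show j + (k + (k + j)) = k + j + (k + j) by omega]
    _ = a ^ (k + j) := by
        rw [pow_add_mul_pow_of_pow_eq_pow_succ_mul h, ← pow_add, add_comm]

theorem Polynomial.exists_commute_pow_eq_pow_succ_mul {R A : Type*} [CommRing R] [Ring A]
    [Algebra R A] {a : A} {k : ℕ} {q : R[X]} (h : aeval a (X ^ k * q) = 0)
    (hq : IsUnit (q.coeff 0)) : ∃ s : A, Commute a s ∧ a ^ k = a ^ (k + 1) * s := by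
  obtain ⟨c, hc⟩ := hq
  have hcomm : Commute a (aeval a q.divX) := by
    simpa using (commute_X q.divX).map (aeval a)
  refine ⟨-((c⁻¹ : Rˣ) : R) • aeval a q.divX, hcomm.smul_right _, ?_⟩
  have hsplit : aeval a q = a * aeval a q.divX + (q.coeff 0) • 1 := by
    conv_lhs => rw [← X_mul_divX_add q, map_add, map_mul, aeval_X, aeval_C,
      Algebra.algebraMap_eq_smul_one]
  rw [map_mul, map_pow, aeval_X, hsplit, mul_add, ← hc, mul_smul_comm, mul_one,
    ← mul_assoc, ← pow_succ, add_eq_zero_iff_eq_neg'] at h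
  rw [neg_smul, mul_neg, mul_smul_comm, ← smul_neg, ← h, smul_smul, Units.inv_mul, one_smul]

namespace Matrix

variable {n α : Type*} [Fintype n] [Ring α]

theorem map_intCast_mul (P Q : Matrix n n ℤ) :
    (P * Q).map (Int.cast : ℤ → α) = P.map (↑) * Q.map (↑) :=
  Matrix.map_mul (f := Int.castRingHom α)

theorem map_intCast_pow [DecidableEq n] (P : Matrix n n ℤ) (k : ℕ) :
    (P ^ k).map (Int.cast : ℤ → α) = P.map (↑) ^ k :=
  map_pow (Int.castRingHom α).mapMatrix P k

theorem intCast_vecMul (v : n → ℤ) (P : Matrix n n ℤ) :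
    (fun i => ((v ᵥ* P) i : α)) = (fun i => (v i : α)) ᵥ* P.map (↑) :=
  funext fun i => (Int.castRingHom α).map_vecMul P v i

theorem intCast_vecMul_vecMul_map_of_mul_mul_eq {P Q : Matrix n n ℤ} (hPQ : P * Q * P = P)
    {w : n → α} {u : n → ℤ} (hu : w ᵥ* P.map (↑) = fun i => (u i : α)) :
    (fun i => ((u ᵥ* Q) i : α)) ᵥ* P.map (↑) = w ᵥ* P.map (↑) := by
  rw [intCast_vecMul, ← hu, vecMul_vecMul, vecMul_vecMul, ← Matrix.mul_assoc,
    ← map_intCast_mul, ← map_intCast_mul, hPQ]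

end Matrix

/-- For a pseudo-unimodular square integer matrix `M` (the product of its nonzero complex
eigenvalues, with multiplicities, is `±1`, i.e. the lowest nonzero coefficient of the
characteristic polynomial is `±1`), the set `Δ_M` of rational row vectors mapped into
`ℤ^d` by some power of `M` equals `ℤ^d + E₀`, where `E₀` is the generalized
left-eigenspace of `M` for the eigenvalue `0` over `ℚ`. -/
theorem deltaM_of_pseudoUnimodular
    (d : ℕ) (M : Matrix (Fin d) (Fin d) ℤ)
    (hpu : ∃ (k : ℕ) (q : Polynomial ℤ), M.charpoly = Polynomial.X ^ k * q ∧
      (q.coeff 0 = 1 ∨ q.coeff 0 = -1)) :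
    {w : Fin d → ℚ | ∃ n : ℕ, ∀ i, ∃ z : ℤ,
        (w ᵥ* ((M.map (Int.cast : ℤ → ℚ)) ^ n)) i = z} =
      {w : Fin d → ℚ | ∃ (z : Fin d → ℤ) (e : Fin d → ℚ),
        (∃ n : ℕ, e ᵥ* ((M.map (Int.cast : ℤ → ℚ)) ^ n) = 0) ∧
        w = (fun i => (z i : ℚ)) + e} := by
  obtain ⟨k, q, hq, hc⟩ := hpu
  obtain ⟨S, hMS, hkS⟩ : ∃ S, Commute M S ∧ M ^ k = M ^ (k + 1) * S :=
    exists_commute_pow_eq_pow_succ_mul (hq ▸ M.aeval_self_charpoly)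
      (by rcases hc with h | h <;> simp [h])
  ext w
  constructor
  · rintro ⟨n, hw⟩
    choose u hu using hw
    have hwN : w ᵥ* (M ^ (k + n)).map (↑) = fun i => ((u ᵥ* M ^ k) i : ℚ) := by
      rw [intCast_vecMul, ← funext hu, map_intCast_pow, map_intCast_pow, vecMul_vecMul, ← pow_add,
        Nat.add_comm]
    refine ⟨u ᵥ* M ^ k ᵥ* S ^ (k + n), _, ⟨k + n, ?_⟩, (add_sub_cancel _ _).symm⟩
    have hreg := hMS.pow_mul_pow_mul_pow_of_pow_eq_pow_succ_mul hkS (k.le_add_right n)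
    rw [sub_vecMul, ← map_intCast_pow,
      intCast_vecMul_vecMul_map_of_mul_mul_eq hreg hwN, sub_self]
  · rintro ⟨z, e, ⟨n, hn⟩, rfl⟩
    refine ⟨n, fun i => ⟨(z ᵥ* M ^ n) i, ?_⟩⟩
    rw [add_vecMul, hn, add_zero, ← map_intCast_pow, ← intCast_vecMul]
end

section
/- Let M be a square integer matrix such that M^n ≡ 0 modulo det(M) for some n ∈ ℕ (i.e., det(M) divides every entry of M^n). Then Δ_M = {w ∈ ℚ^d : ∃k, w M^k ∈ ℤ^d} equals ⋃_{k∈ℕ} (1/det(M)^k) ℤ^d. -/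
open Matrix

private lemma castVec_vecMul {d : ℕ} (z : Fin d → ℤ) (B : Matrix (Fin d) (Fin d) ℤ) (i : Fin d) :
    ((fun j => (z j : ℚ)) ᵥ* (B.map (Int.cast : ℤ → ℚ))) i = ((z ᵥ* B) i : ℚ) := by
  simp [vecMul, dotProduct, Matrix.map_apply]

private lemma castMat_pow {d : ℕ} (B : Matrix (Fin d) (Fin d) ℤ) (k : ℕ) :
    (B ^ k).map (Int.cast : ℤ → ℚ) = (B.map (Int.cast : ℤ → ℚ)) ^ k := by
  have := map_pow (Int.castRingHom ℚ).mapMatrix B k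
  simpa [RingHom.mapMatrix_apply] using this

/-- If `M` is a square integer matrix with `det M ≠ 0` and some power of `M` is zero modulo
`det M`, then `Δ_M = ⋃ₖ (1 / det(M)ᵏ) ℤ^d`. -/
theorem deltaM_of_power_zero_mod_det
    (d : ℕ) (M : Matrix (Fin d) (Fin d) ℤ)
    (hdet : M.det ≠ 0)
    (hpow : ∃ n : ℕ, ∀ i j, M.det ∣ (M ^ n) i j) :
    {w : Fin d → ℚ | ∃ k : ℕ, ∀ i, ∃ z : ℤ,
        (w ᵥ* ((M.map (Int.cast : ℤ → ℚ)) ^ k)) i = z} =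
      {w : Fin d → ℚ | ∃ (k : ℕ) (z : Fin d → ℤ),
        w = fun i => (z i : ℚ) / (M.det : ℚ) ^ k} := by
  have hdetQ : ((M.det : ℚ)) ≠ 0 := Int.cast_ne_zero.mpr hdet
  set Q : Matrix (Fin d) (Fin d) ℚ := M.map (Int.cast : ℤ → ℚ) with hQ
  have hQdet : Q.det = (M.det : ℚ) := ((Int.castRingHom ℚ).map_det M).symm
  ext w
  simp only [Set.mem_setOf_eq]
  constructor
  · rintro ⟨k, hk⟩
    choose u hu using hk
    have hucast : (fun j => ((u j : ℚ))) = w ᵥ* Q ^ k := by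
      funext j; exact (hu j).symm
    refine ⟨k, u ᵥ* (M.adjugate ^ k), ?_⟩
    have hadj : (M.adjugate).map (Int.cast : ℤ → ℚ) = Q.adjugate :=
      (Int.castRingHom ℚ).map_adjugate M
    have key : ∀ i, ((u ᵥ* M.adjugate ^ k) i : ℚ) = w i * (M.det : ℚ) ^ k := by
      intro i
      have h1 : ((u ᵥ* M.adjugate ^ k) i : ℚ)
          = ((fun j => ((u j : ℚ))) ᵥ* ((M.adjugate ^ k).map (Int.cast : ℤ → ℚ))) i :=
        (castVec_vecMul u (M.adjugate ^ k) i).symm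
      have h2 : (M.adjugate ^ k).map (Int.cast : ℤ → ℚ) = Q.adjugate ^ k := by
        rw [castMat_pow, hadj]
      have hc : Commute Q Q.adjugate := by
        unfold Commute SemiconjBy
        rw [Matrix.mul_adjugate, Matrix.adjugate_mul]
      have h3 : Q ^ k * Q.adjugate ^ k = ((M.det : ℚ)) ^ k • 1 := by
        rw [← hc.mul_pow, Matrix.mul_adjugate, hQdet, smul_pow, one_pow]
      rw [h1, h2, hucast, Matrix.vecMul_vecMul, h3]
      simp [vecMul, dotProduct, Matrix.one_apply, mul_ite, mul_comm]
    funext i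
    rw [eq_div_iff (pow_ne_zero _ hdetQ), ← key i]
  · rintro ⟨k, z, rfl⟩
    obtain ⟨n, hn⟩ := hpow
    set A : Matrix (Fin d) (Fin d) ℤ := fun i j => (M ^ n) i j / M.det with hA
    have hMn : M ^ n = M.det • A := by
      ext i j
      simp only [hA, Matrix.smul_apply, smul_eq_mul]
      exact (Int.mul_ediv_cancel' (hn i j)).symm
    refine ⟨n * k, fun i => ⟨(z ᵥ* (A ^ k)) i, ?_⟩⟩
    have hQpow : Q ^ (n * k) = ((M.det ^ k • A ^ k).map (Int.cast : ℤ → ℚ)) := by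
      rw [hQ, ← castMat_pow, pow_mul, hMn, smul_pow]
    rw [hQpow]
    have hw : (fun i => (z i : ℚ) / (M.det : ℚ) ^ k)
        = ((M.det : ℚ) ^ k)⁻¹ • (fun j => ((z j : ℚ))) := by
      funext j; simp [div_eq_inv_mul]
    rw [hw, Matrix.smul_vecMul]
    have := castVec_vecMul z (M.det ^ k • A ^ k) i
    simp only [Pi.smul_apply, this, Matrix.smul_vecMul]
    have h4 : z ᵥ* (M.det ^ k • A ^ k) = M.det ^ k • (z ᵥ* A ^ k) := by
      ext j
      simp [vecMul, dotProduct, Finset.mul_sum, mul_comm, mul_left_comm]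
    rw [h4]
    simp only [Pi.smul_apply, smul_eq_mul]
    field_simp
    rw [Int.cast_mul, Int.cast_pow]
end
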